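/- Let k ≥ 2 and p ≥ 2. Then there exists n_0 depending only on k such that for all n ≥ n_0: ex_p(n, kP_3) = e_p(K_{k−1} + M_{n−k+1}), where kP_3 denotes k vertex-disjoint copies of the path P_3. Moreover, K_{k−1} + M_{n−k+1} is the unique extremal graph: an (kP_3)-free graph G on n vertices satisfies e_p(G) = ex_p(n,kP_3) if and only if G is isomorphic to K_{k−1} + M_{n−k+1}. -/

import Mathlib

open Finset

namespace Paper

/-- `Copy H G`: `G` contains a subgraph isomorphic to `H`. -/
def Copy {α β : Type*} (H : SimpleGraph α) (G : SimpleGraph β) : Prop :=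
  ∃ f : α ↪ β, ∀ a b, H.Adj a b → G.Adj (f a) (f b)

/-- `G` is `H`-free. -/
def Free {α β : Type*} (H : SimpleGraph α) (G : SimpleGraph β) : Prop := ¬ Copy H G

/-- Degree of a vertex. -/
noncomputable def degp {V : Type*} (G : SimpleGraph V) (v : V) : ℕ := (G.neighborSet v).ncard

/-- Degree power sum `e_p(G)`. -/
noncomputable def ep {V : Type*} [Fintype V] (p : ℕ) (G : SimpleGraph V) : ℕ :=
  ∑ v, degp G v ^ p

/-- `ex_p(n, H)`. -/
noncomputable def exDP {α : Type*} (n p : ℕ) (H : SimpleGraph α) : ℕ :=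
  sSup {m | ∃ G : SimpleGraph (Fin n), Free H G ∧ ep p G = m}

/-- Join `G + H`. -/
def joinG {α β : Type*} (G : SimpleGraph α) (H : SimpleGraph β) : SimpleGraph (α ⊕ β) :=
  SimpleGraph.fromRel (fun x y =>
    match x, y with
    | Sum.inl a, Sum.inl a' => G.Adj a a'
    | Sum.inr b, Sum.inr b' => H.Adj b b'
    | Sum.inl _, Sum.inr _ => True
    | Sum.inr _, Sum.inl _ => False)

/-- `M_t`: maximum matching on `t` vertices. -/
def matchG (t : ℕ) : SimpleGraph (Fin t) :=
  SimpleGraph.fromRel (fun i j => (i : ℕ) / 2 = (j : ℕ) / 2)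

/-- `S_r`: star with `r` leaves. -/
def starG (r : ℕ) : SimpleGraph (Fin (r + 1)) :=
  SimpleGraph.fromRel (fun i _ => i = 0)

/-- Disjoint union of graphs. -/
def forestG {k : ℕ} (m : Fin k → ℕ) (G : ∀ i, SimpleGraph (Fin (m i))) :
    SimpleGraph ((i : Fin k) × Fin (m i)) :=
  SimpleGraph.fromRel (fun x y => ∃ h : x.1 = y.1, (G y.1).Adj (h ▸ x.2) y.2)

/-- Path on `t` vertices. -/
def pathG (t : ℕ) : SimpleGraph (Fin t) := SimpleGraph.pathGraph t

/-- `H(n, ℓ)`. -/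
def HG (n ℓ : ℕ) : SimpleGraph (Fin n) :=
  SimpleGraph.fromRel (fun i j =>
    (i : ℕ) < ℓ / 2 - 1 ∨ (Odd ℓ ∧ (i : ℕ) = ℓ / 2 - 1 ∧ (j : ℕ) = ℓ / 2))

/-- `H(n, F)` for a linear forest with path orders `ℓ`. -/
def HGF (n : ℕ) {k : ℕ} (ℓ : Fin k → ℕ) : SimpleGraph (Fin n) :=
  SimpleGraph.fromRel (fun i j =>
    (i : ℕ) < (∑ t, ℓ t / 2) - 1 ∨
    ((∀ t, Odd (ℓ t)) ∧ (i : ℕ) = (∑ t, ℓ t / 2) - 1 ∧ (j : ℕ) = ∑ t, ℓ t / 2))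

/-- The broom `B_{ℓ,s}`. -/
def broomG (ℓ s : ℕ) : SimpleGraph (Fin (ℓ + s)) :=
  SimpleGraph.fromRel (fun i j =>
    ((i : ℕ) + 1 = (j : ℕ) ∧ (j : ℕ) < ℓ) ∨ ((i : ℕ) = ℓ - 2 ∧ ℓ ≤ (j : ℕ)))

/-- Near `(r-1)`-regular graph. -/
def NearRegular {V : Type*} [Fintype V] (r : ℕ) (L : SimpleGraph V) : Prop :=
  if Even ((r - 1) * Fintype.card V) then ∀ v, degp L v = r - 1
  else ∃ w, degp L w = r - 2 ∧ ∀ v, v ≠ w → degp L v = r - 1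


section Aux
open SimpleGraph

variable {V W : Type*}

lemma degp_eq_degree [Fintype V] (G : SimpleGraph V) [DecidableRel G.Adj] (v : V) :
    degp G v = G.degree v := by
  rw [degp, ← Nat.card_coe_set_eq, Nat.card_eq_fintype_card,
    SimpleGraph.card_neighborSet_eq_degree]

lemma degp_congr [Fintype V] [Fintype W] {G : SimpleGraph V} {G' : SimpleGraph W}
    (φ : G ≃g G') (v : V) : degp G v = degp G' (φ v) := by
  rw [degp, degp, ← Nat.card_coe_set_eq, ← Nat.card_coe_set_eq]
  exact Nat.card_congr (φ.mapNeighborSet v)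

lemma ep_congr [Fintype V] [Fintype W] {G : SimpleGraph V} {G' : SimpleGraph W}
    (φ : G ≃g G') (p : ℕ) : ep p G = ep p G' := by
  rw [ep, ep, ← Equiv.sum_comp φ.toEquiv (fun v => degp G' v ^ p)]
  exact Finset.sum_congr rfl fun v _ => by rw [degp_congr φ v]; rfl

lemma copy_congr {α : Type*} {H : SimpleGraph α} {G : SimpleGraph V} {G' : SimpleGraph W}
    (φ : G ≃g G') : Copy H G → Copy H G' := fun ⟨f, hf⟩ =>
  ⟨f.trans φ.toEmbedding.toEmbedding, fun a b hab => φ.map_adj_iff.2 (hf a b hab)⟩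

lemma free_congr {α : Type*} {H : SimpleGraph α} {G : SimpleGraph V} {G' : SimpleGraph W}
    (φ : G ≃g G') : Free H G ↔ Free H G' :=
  ⟨fun h c => h (copy_congr φ.symm c), fun h c => h (copy_congr φ c)⟩

lemma even_card_of_swap [DecidableEq V] :
    ∀ s : Finset (V × V), (∀ q ∈ s, (q.2, q.1) ∈ s) → (∀ q ∈ s, q.1 ≠ q.2) →
      Even s.card := by
  intro s
  induction s using Finset.strongInduction with
  | _ s ih =>
    intro hswap hne
    rcases s.eq_empty_or_nonempty with rfl | ⟨q, hq⟩
    · simp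
    · have hqs : (q.2, q.1) ∈ s := hswap q hq
      have hqq : (q.2, q.1) ≠ q := by
        intro h
        rw [Prod.ext_iff] at h
        exact hne q hq h.1.symm
      have h1 : (q.2, q.1) ∈ s.erase q := Finset.mem_erase.2 ⟨hqq, hqs⟩
      set s' := (s.erase q).erase (q.2, q.1) with hs'
      have hsub : s' ⊂ s :=
        lt_of_le_of_lt (Finset.erase_subset _ _) (Finset.erase_ssubset hq)
      have hcard : s'.card = s.card - 2 := by
        rw [hs', Finset.card_erase_of_mem h1, Finset.card_erase_of_mem hq]; omega
      have hmem : ∀ r, r ∈ s' ↔ r ∈ s ∧ r ≠ q ∧ r ≠ (q.2, q.1) := by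
        intro r
        simp only [hs', Finset.mem_erase]
        tauto
      have hev : Even s'.card := by
        apply ih s' hsub
        · intro r hr
          rw [hmem] at hr ⊢
          refine ⟨hswap r hr.1, ?_, ?_⟩
          · intro h; apply hr.2.2; rw [← h]
          · intro h; apply hr.2.1
            have : r = ((r.2, r.1).2, (r.2, r.1).1) := rfl
            rw [this, h]
        · intro r hr; exact hne r ((hmem r).1 hr).1
      have h2 : 2 ≤ s.card := by
        have := Finset.card_erase_of_mem hq
        have h1c : 0 < (s.erase q).card := Finset.card_pos.2 ⟨_, h1⟩
        omega
      rcases hev with ⟨t, ht⟩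
      exact ⟨t + 1, by omega⟩

lemma sum_eq_of_le_of_eq {ι : Type*} {s : Finset ι} {f : ι → ℕ} {c : ℕ}
    (h : ∀ i ∈ s, f i ≤ c) (he : ∑ i ∈ s, f i = s.card * c) :
    ∀ i ∈ s, f i = c := by
  intro i hi
  by_contra hne
  have hlt : f i < c := lt_of_le_of_ne (h i hi) hne
  have : ∑ j ∈ s, f j < ∑ _j ∈ s, c := Finset.sum_lt_sum h ⟨i, hi, hlt⟩
  rw [Finset.sum_const, smul_eq_mul] at this
  omega

lemma adj_of_deg_full [Fintype V] [DecidableEq V] (G : SimpleGraph V) [DecidableRel G.Adj]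
    {v : V} (h : G.degree v = Fintype.card V - 1) {w : V} (hw : w ≠ v) : G.Adj v w := by
  have hsub : G.neighborFinset v ⊆ Finset.univ.erase v := by
    intro x hx
    rw [SimpleGraph.mem_neighborFinset] at hx
    exact Finset.mem_erase.2 ⟨(G.ne_of_adj hx).symm, Finset.mem_univ _⟩
  have hcard : (Finset.univ.erase v).card ≤ (G.neighborFinset v).card := by
    rw [SimpleGraph.card_neighborFinset_eq_degree, h, Finset.card_erase_of_mem (Finset.mem_univ v),
      Finset.card_univ]
  have heq := Finset.eq_of_subset_of_card_le hsub hcard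
  have : w ∈ G.neighborFinset v := by
    rw [heq]; exact Finset.mem_erase.2 ⟨hw, Finset.mem_univ _⟩
  rwa [SimpleGraph.mem_neighborFinset] at this

end Aux
section Adj
open SimpleGraph

lemma matchG_adj {m : ℕ} {a b : Fin m} :
    (matchG m).Adj a b ↔ a ≠ b ∧ (a : ℕ) / 2 = (b : ℕ) / 2 := by
  simp only [matchG, SimpleGraph.fromRel_adj]
  constructor
  · rintro ⟨h1, h2 | h2⟩ <;> exact ⟨h1, by omega⟩
  · rintro ⟨h1, h2⟩; exact ⟨h1, Or.inl h2⟩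

lemma joinG_adj_ll {α β : Type*} {H : SimpleGraph β} {a b : Fin 0 ⊕ β} (x y : α)
    (G : SimpleGraph α) : True := trivial

lemma joinG_top_adj_ll {r : ℕ} {β : Type*} {H : SimpleGraph β} {a b : Fin r} :
    (joinG (⊤ : SimpleGraph (Fin r)) H).Adj (Sum.inl a) (Sum.inl b) ↔ a ≠ b := by
  simp only [joinG, SimpleGraph.fromRel_adj]
  constructor
  · rintro ⟨h, _⟩ hab; exact h (by rw [hab])
  · intro h
    exact ⟨fun hc => h (by injection hc), Or.inl (by simpa using h)⟩

lemma joinG_top_adj_lr {r : ℕ} {β : Type*} {H : SimpleGraph β} {a : Fin r} {b : β} :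
    (joinG (⊤ : SimpleGraph (Fin r)) H).Adj (Sum.inl a) (Sum.inr b) := by
  simp only [joinG, SimpleGraph.fromRel_adj]
  exact ⟨by simp, Or.inl trivial⟩

lemma joinG_top_adj_rr {r : ℕ} {β : Type*} {H : SimpleGraph β} {a b : β} :
    (joinG (⊤ : SimpleGraph (Fin r)) H).Adj (Sum.inr a) (Sum.inr b) ↔ H.Adj a b := by
  simp only [joinG, SimpleGraph.fromRel_adj]
  constructor
  · rintro ⟨h, h2 | h2⟩
    · exact h2
    · exact h2.symm
  · intro h
    exact ⟨fun hc => H.ne_of_adj h (by injection hc), Or.inl h⟩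

lemma kP3_adj {k : ℕ} {x y : (i : Fin k) × Fin 3} :
    (forestG (fun _ : Fin k => 3) (fun _ => pathG 3)).Adj x y ↔
      x.1 = y.1 ∧ ((x.2 : ℕ) + 1 = (y.2 : ℕ) ∨ (y.2 : ℕ) + 1 = (x.2 : ℕ)) := by
  obtain ⟨i, a⟩ := x
  obtain ⟨j, b⟩ := y
  simp only [forestG, SimpleGraph.fromRel_adj, pathG, SimpleGraph.pathGraph_adj]
  constructor
  · rintro ⟨hne, ⟨rfl, h⟩ | ⟨rfl, h⟩⟩
    · exact ⟨rfl, by simpa using h⟩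
    · refine ⟨rfl, ?_⟩
      simp only [eq_rec_constant] at h
      omega
  · rintro ⟨rfl, h⟩
    refine ⟨?_, Or.inl ⟨rfl, by simpa using h⟩⟩
    intro hc
    have : a = b := by
      have := congrArg Sigma.snd hc
      simpa using this
    omega

end Adj
section Target
open SimpleGraph

/-- partner index -/
def ptn (b : ℕ) : ℕ := if b % 2 = 0 then b + 1 else b - 1

variable {r m : ℕ}

lemma ns_inl (a : Fin r) :
    (joinG (⊤ : SimpleGraph (Fin r)) (matchG m)).neighborSet (Sum.inl a) = {Sum.inl a}ᶜ := by
  ext y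
  cases y with
  | inl b =>
      simp only [SimpleGraph.mem_neighborSet, joinG_top_adj_ll, Set.mem_compl_iff,
        Set.mem_singleton_iff]
      constructor
      · intro h hc; exact h (by injection hc with h'; exact h'.symm)
      · intro h hc; exact h (by rw [hc])
  | inr b =>
      simp only [SimpleGraph.mem_neighborSet, Set.mem_compl_iff, Set.mem_singleton_iff]
      simp [joinG_top_adj_lr]

lemma degp_target_inl (a : Fin r) :
    degp (joinG (⊤ : SimpleGraph (Fin r)) (matchG m)) (Sum.inl a) = r + m - 1 := by
  rw [degp, ns_inl, Set.compl_eq_univ_diff, Set.ncard_diff (Set.subset_univ _),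
    Set.ncard_univ, Set.ncard_singleton, Nat.card_eq_fintype_card]
  simp

lemma ncard_range_inl : (Set.range (Sum.inl : Fin r → Fin r ⊕ Fin m)).ncard = r := by
  rw [← Set.image_univ, Set.ncard_image_of_injective _ Sum.inl_injective, Set.ncard_univ,
    Nat.card_eq_fintype_card, Fintype.card_fin]

lemma ns_inr_part (b : Fin m) (h : ptn (b : ℕ) < m) :
    (joinG (⊤ : SimpleGraph (Fin r)) (matchG m)).neighborSet (Sum.inr b) =
      Set.range Sum.inl ∪ {Sum.inr ⟨ptn (b : ℕ), h⟩} := by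
  have hb := b.is_lt
  ext y
  cases y with
  | inl a =>
      simp only [SimpleGraph.mem_neighborSet, Set.mem_union, Set.mem_range,
        Set.mem_singleton_iff]
      constructor
      · intro _; exact Or.inl ⟨a, rfl⟩
      · intro _; exact ((joinG_top_adj_lr (H := matchG m) (a := a) (b := b))).symm
  | inr c =>
      have hc := c.is_lt
      simp only [SimpleGraph.mem_neighborSet, Set.mem_union, Set.mem_range,
        Set.mem_singleton_iff, joinG_top_adj_rr, matchG_adj]
      constructor
      · rintro ⟨h1, h2⟩
        right
        have h1' : (b : ℕ) ≠ (c : ℕ) := fun hc' => h1 (Fin.ext hc'.symm).symm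
        have : (c : ℕ) = ptn (b : ℕ) := by
          simp only [ptn] at *
          split <;> omega
        exact congrArg Sum.inr (Fin.ext this)
      · rintro (⟨a, hc'⟩ | hc')
        · exact absurd hc' (by simp)
        · have hcv : (c : ℕ) = ptn (b : ℕ) := by
            injection hc' with h'
            exact congrArg Fin.val h'
          constructor
          · intro hcb
            rw [hcb] at hcv
            simp only [ptn] at hcv
            split at hcv <;> omega
          · simp only [ptn] at hcv ⊢
            split at hcv <;> omega

lemma ns_inr_nopart (b : Fin m) (h : ¬ ptn (b : ℕ) < m) :
    (joinG (⊤ : SimpleGraph (Fin r)) (matchG m)).neighborSet (Sum.inr b) =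
      Set.range Sum.inl := by
  have hb := b.is_lt
  ext y
  cases y with
  | inl a =>
      simp only [SimpleGraph.mem_neighborSet, Set.mem_range]
      constructor
      · intro _; exact ⟨a, rfl⟩
      · intro _; exact ((joinG_top_adj_lr (H := matchG m) (a := a) (b := b))).symm
  | inr c =>
      have hc := c.is_lt
      simp only [SimpleGraph.mem_neighborSet, Set.mem_range, joinG_top_adj_rr, matchG_adj]
      constructor
      · rintro ⟨h1, h2⟩
        exfalso
        have h1' : (b : ℕ) ≠ (c : ℕ) := fun hc' => h1 (Fin.ext hc'.symm).symm
        simp only [ptn] at h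
        split at h <;> omega
      · rintro ⟨a, hc'⟩
        exact absurd hc' (by simp)

lemma degp_target_inr (b : Fin m) :
    degp (joinG (⊤ : SimpleGraph (Fin r)) (matchG m)) (Sum.inr b) =
      r + (if ptn (b : ℕ) < m then 1 else 0) := by
  by_cases h : ptn (b : ℕ) < m
  · rw [degp, ns_inr_part b h, if_pos h, Set.ncard_union_eq ?_ ?_ ?_, ncard_range_inl,
      Set.ncard_singleton]
    · simp only [Set.disjoint_singleton_right, Set.mem_range]
      rintro ⟨a, ha⟩
      exact absurd ha (by simp)
    · exact Set.toFinite _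
    · exact Set.toFinite _
  · rw [degp, ns_inr_nopart b h, if_neg h, ncard_range_inl]
    omega

lemma card_unpartnered :
    (Finset.univ.filter (fun b : Fin m => ¬ ptn (b : ℕ) < m)).card = m % 2 := by
  rcases Nat.even_or_odd m with he | ho
  · have : (Finset.univ.filter (fun b : Fin m => ¬ ptn (b : ℕ) < m)) = ∅ := by
      rw [Finset.filter_eq_empty_iff]
      intro b _
      have hb := b.is_lt
      have hm2 : m % 2 = 0 := Nat.even_iff.1 he
      simp only [ptn, not_not]
      split <;> omega
    rw [this, Finset.card_empty, Nat.even_iff.1 he]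
  · have hm2 : m % 2 = 1 := Nat.odd_iff.1 ho
    have hm1 : m - 1 < m := by omega
    have : (Finset.univ.filter (fun b : Fin m => ¬ ptn (b : ℕ) < m)) = {⟨m - 1, hm1⟩} := by
      ext b
      have hb := b.is_lt
      rw [Finset.mem_filter]
      simp only [Finset.mem_univ, true_and,
        Finset.mem_singleton, Fin.ext_iff, ptn]
      split <;> omega
    rw [this, Finset.card_singleton, hm2]

lemma ep_target (p : ℕ) :
    ep p (joinG (⊤ : SimpleGraph (Fin r)) (matchG m)) =
      r * (r + m - 1) ^ p + (m - m % 2) * (r + 1) ^ p + (m % 2) * r ^ p := by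
  rw [ep, Fintype.sum_sum_type]
  have h1 : ∑ a : Fin r, degp (joinG (⊤ : SimpleGraph (Fin r)) (matchG m)) (Sum.inl a) ^ p
      = r * (r + m - 1) ^ p := by
    simp [degp_target_inl]
  have h2 : ∑ b : Fin m, degp (joinG (⊤ : SimpleGraph (Fin r)) (matchG m)) (Sum.inr b) ^ p
      = (m - m % 2) * (r + 1) ^ p + (m % 2) * r ^ p := by
    have : ∀ b : Fin m, degp (joinG (⊤ : SimpleGraph (Fin r)) (matchG m)) (Sum.inr b) ^ p
        = if ptn (b : ℕ) < m then (r + 1) ^ p else r ^ p := by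
      intro b
      rw [degp_target_inr]
      split <;> simp
    rw [Finset.sum_congr rfl (fun b _ => this b), Finset.sum_ite, Finset.sum_const,
      Finset.sum_const, smul_eq_mul, smul_eq_mul]
    have hneg := Finset.card_filter_add_card_filter_not
      (s := (Finset.univ : Finset (Fin m))) (p := fun b => ptn (b : ℕ) < m)
    rw [card_unpartnered] at *
    have hcu : (Finset.univ : Finset (Fin m)).card = m := by simp
    have : (Finset.univ.filter (fun b : Fin m => ptn (b : ℕ) < m)).card = m - m % 2 := by
      rw [hcu] at hneg
      omega
    rw [this]
  rw [h1, h2]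
  ring
end Target
section FreePack
open SimpleGraph

lemma target_free {r m k : ℕ} (hrk : r < k) :
    Free (forestG (fun _ : Fin k => 3) (fun _ => pathG 3))
      (joinG (⊤ : SimpleGraph (Fin r)) (matchG m)) := by
  rintro ⟨f, hf⟩
  have key : ∀ i : Fin k, ∃ t : Fin 3, (f ⟨i, t⟩).isLeft := by
    intro i
    by_contra hno
    push_neg at hno
    have h0 := hno 0
    have h1 := hno 1
    have h2 := hno 2
    obtain ⟨b0, hb0⟩ : ∃ b, f ⟨i, 0⟩ = Sum.inr b := by
      cases h : f ⟨i, (0 : Fin 3)⟩ with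
      | inl a => rw [h] at h0; simp at h0
      | inr b => exact ⟨b, rfl⟩
    obtain ⟨b1, hb1⟩ : ∃ b, f ⟨i, 1⟩ = Sum.inr b := by
      cases h : f ⟨i, (1 : Fin 3)⟩ with
      | inl a => rw [h] at h1; simp at h1
      | inr b => exact ⟨b, rfl⟩
    obtain ⟨b2, hb2⟩ : ∃ b, f ⟨i, 2⟩ = Sum.inr b := by
      cases h : f ⟨i, (2 : Fin 3)⟩ with
      | inl a => rw [h] at h2; simp at h2
      | inr b => exact ⟨b, rfl⟩
    have a01 := hf ⟨i, 0⟩ ⟨i, 1⟩ (kP3_adj.2 ⟨rfl, Or.inl rfl⟩)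
    have a12 := hf ⟨i, 1⟩ ⟨i, 2⟩ (kP3_adj.2 ⟨rfl, Or.inl rfl⟩)
    rw [hb0, hb1] at a01
    rw [hb1, hb2] at a12
    rw [joinG_top_adj_rr, matchG_adj] at a01 a12
    have hne02 : b0 ≠ b2 := by
      intro h
      have : f ⟨i, (0 : Fin 3)⟩ = f ⟨i, (2 : Fin 3)⟩ := by rw [hb0, hb2, h]
      have := f.injective this
      have := congrArg (fun x : (i : Fin k) × Fin 3 => (x.2 : ℕ)) this
      simpa using this
    have v01 : (b0 : ℕ) ≠ (b1 : ℕ) := fun h => a01.1 (Fin.ext h)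
    have v12 : (b1 : ℕ) ≠ (b2 : ℕ) := fun h => a12.1 (Fin.ext h)
    have v02 : (b0 : ℕ) ≠ (b2 : ℕ) := fun h => hne02 (Fin.ext h)
    have e01 := a01.2
    have e12 := a12.2
    omega
  choose t ht using key
  have key2 : ∀ i : Fin k, ∃ a : Fin r, f ⟨i, t i⟩ = Sum.inl a := fun i =>
    Sum.isLeft_iff.1 (ht i)
  choose g hg using key2
  have hginj : Function.Injective g := by
    intro i j hij
    have : f ⟨i, t i⟩ = f ⟨j, t j⟩ := by rw [hg i, hg j, hij]
    have := f.injective this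
    exact congrArg Sigma.fst this
  have := Fintype.card_le_of_injective g hginj
  simp only [Fintype.card_fin] at this
  omega

variable {V : Type*} [DecidableEq V]

/-- a packing of `j` disjoint paths `P₃` avoiding `A`. -/
def IsPack (G : SimpleGraph V) (j : ℕ) (A : Finset V) (f : Fin j × Fin 3 → V) : Prop :=
  Function.Injective f ∧
    (∀ i : Fin j, G.Adj (f (i, 0)) (f (i, 1)) ∧ G.Adj (f (i, 1)) (f (i, 2))) ∧
    ∀ x, f x ∉ A

lemma copy_of_pack {G : SimpleGraph V} {k : ℕ} {f : Fin k × Fin 3 → V}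
    (h : IsPack G k ∅ f) :
    Copy (forestG (fun _ : Fin k => 3) (fun _ => pathG 3)) G := by
  obtain ⟨hinj, hadj, -⟩ := h
  refine ⟨⟨fun x => f (x.1, x.2), ?_⟩, ?_⟩
  · rintro ⟨i, a⟩ ⟨j, b⟩ hxy
    have := hinj hxy
    rw [Prod.ext_iff] at this
    obtain ⟨h1, h2⟩ := this
    dsimp at h1 h2
    subst h1
    exact congrArg (Sigma.mk i) h2
  · rintro ⟨i, a⟩ ⟨j, b⟩ hab
    rw [kP3_adj] at hab
    obtain ⟨hij, hrel⟩ := hab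
    dsimp at hij
    subst hij
    show G.Adj (f (i, a)) (f (i, b))
    have hrel' : (a : ℕ) + 1 = (b : ℕ) ∨ (b : ℕ) + 1 = (a : ℕ) := hrel
    have ha : (a : ℕ) < 3 := a.is_lt
    have hb : (b : ℕ) < 3 := b.is_lt
    rcases hrel' with h' | h'
    · -- a + 1 = b
      have : ((a : ℕ) = 0 ∧ (b : ℕ) = 1) ∨ ((a : ℕ) = 1 ∧ (b : ℕ) = 2) := by omega
      rcases this with ⟨h1, h2⟩ | ⟨h1, h2⟩
      · have : a = 0 ∧ b = 1 := ⟨Fin.ext h1, Fin.ext h2⟩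
        rw [this.1, this.2]; exact (hadj i).1
      · have : a = 1 ∧ b = 2 := ⟨Fin.ext h1, Fin.ext h2⟩
        rw [this.1, this.2]; exact (hadj i).2
    · have : ((b : ℕ) = 0 ∧ (a : ℕ) = 1) ∨ ((b : ℕ) = 1 ∧ (a : ℕ) = 2) := by omega
      rcases this with ⟨h1, h2⟩ | ⟨h1, h2⟩
      · have : b = 0 ∧ a = 1 := ⟨Fin.ext h1, Fin.ext h2⟩
        rw [this.1, this.2]; exact (hadj i).1.symm
      · have : b = 1 ∧ a = 2 := ⟨Fin.ext h1, Fin.ext h2⟩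
        rw [this.1, this.2]; exact (hadj i).2.symm

lemma vec3_cases : ∀ c : Fin 3, c = 0 ∨ c = 1 ∨ c = 2 := by decide

lemma pack_extend [Fintype V] {G : SimpleGraph V} [DecidableRel G.Adj] {j : ℕ} {A : Finset V}
    {f : Fin j × Fin 3 → V} (h : IsPack G j A f) {v : V} (hv : v ∈ A)
    (hdeg : 3 * j + A.card + 2 ≤ G.degree v) :
    ∃ f' : Fin (j + 1) × Fin 3 → V, IsPack G (j + 1) (A.erase v) f' := by
  obtain ⟨hinj, hadj, havoid⟩ := h
  set Forb : Finset V := (Finset.univ.image f) ∪ A with hForb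
  have hForbcard : Forb.card ≤ 3 * j + A.card := by
    calc Forb.card ≤ (Finset.univ.image f).card + A.card := Finset.card_union_le _ _
    _ ≤ 3 * j + A.card := by
        have h1 := Finset.card_image_le (s := (Finset.univ : Finset (Fin j × Fin 3))) (f := f)
        have h2 : (Finset.univ : Finset (Fin j × Fin 3)).card = j * 3 := by simp
        omega
  have hN : 1 < ((G.neighborFinset v) \ Forb).card := by
    have h1 := Finset.le_card_sdiff Forb (G.neighborFinset v)
    rw [SimpleGraph.card_neighborFinset_eq_degree] at h1
    omega
  obtain ⟨a, ha, b, hb, hab⟩ := Finset.one_lt_card.mp hN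
  rw [Finset.mem_sdiff, SimpleGraph.mem_neighborFinset] at ha hb
  obtain ⟨hava, hnFa⟩ := ha
  obtain ⟨havb, hnFb⟩ := hb
  have haim : a ∉ Finset.univ.image f := fun hc => hnFa (Finset.mem_union_left _ hc)
  have hbim : b ∉ Finset.univ.image f := fun hc => hnFb (Finset.mem_union_left _ hc)
  have haA : a ∉ A := fun hc => hnFa (Finset.mem_union_right _ hc)
  have hbA : b ∉ A := fun hc => hnFb (Finset.mem_union_right _ hc)
  have hvim : v ∉ Finset.univ.image f := by
    intro hc
    rw [Finset.mem_image] at hc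
    obtain ⟨x, -, hx⟩ := hc
    exact havoid x (hx ▸ hv)
  have hav : a ≠ v := fun hc => G.irrefl (hc ▸ hava)
  have hbv : b ≠ v := fun hc => G.irrefl (hc ▸ havb)
  refine ⟨fun x => if h : (x.1 : ℕ) < j then f (⟨x.1, h⟩, x.2) else ![a, v, b] x.2, ?_, ?_, ?_⟩
  · -- injective
    rintro ⟨x1, x2⟩ ⟨y1, y2⟩ hxy
    dsimp at hxy
    by_cases hx : (x1 : ℕ) < j <;> by_cases hy : (y1 : ℕ) < j
    · rw [dif_pos hx, dif_pos hy] at hxy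
      have := hinj hxy
      rw [Prod.ext_iff] at this
      have h1 : (x1 : ℕ) = (y1 : ℕ) := by
        have h1' : (⟨(x1 : ℕ), hx⟩ : Fin j) = ⟨(y1 : ℕ), hy⟩ := this.1
        simpa [Fin.ext_iff] using h1'
      exact Prod.ext (Fin.ext h1) this.2
    · exfalso
      rw [dif_pos hx, dif_neg hy] at hxy
      have hmem : f (⟨x1, hx⟩, x2) ∈ Finset.univ.image f :=
        Finset.mem_image_of_mem f (Finset.mem_univ _)
      rcases vec3_cases y2 with rfl | rfl | rfl
      · rw [hxy] at hmem; simp only [Matrix.cons_val_zero] at hmem; exact haim hmem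
      · rw [hxy] at hmem; simp only [Matrix.cons_val_one, Matrix.head_cons] at hmem
        exact hvim hmem
      · rw [hxy] at hmem
        have : ![a, v, b] 2 = b := rfl
        rw [this] at hmem; exact hbim hmem
    · exfalso
      rw [dif_neg hx, dif_pos hy] at hxy
      have hmem : f (⟨y1, hy⟩, y2) ∈ Finset.univ.image f :=
        Finset.mem_image_of_mem f (Finset.mem_univ _)
      rcases vec3_cases x2 with rfl | rfl | rfl
      · rw [← hxy] at hmem; simp only [Matrix.cons_val_zero] at hmem; exact haim hmem
      · rw [← hxy] at hmem; simp only [Matrix.cons_val_one, Matrix.head_cons] at hmem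
        exact hvim hmem
      · rw [← hxy] at hmem
        have : ![a, v, b] 2 = b := rfl
        rw [this] at hmem; exact hbim hmem
    · rw [dif_neg hx, dif_neg hy] at hxy
      have h1 : x1 = y1 := by
        have hx1 := x1.is_lt
        have hy1 := y1.is_lt
        exact Fin.ext (by omega)
      have h2 : x2 = y2 := by
        rcases vec3_cases x2 with rfl | rfl | rfl <;> rcases vec3_cases y2 with rfl | rfl | rfl <;>
          simp only [Matrix.cons_val_zero, Matrix.cons_val_one, Matrix.head_cons] at hxy <;>
          first
          | rfl
          | (exfalso; revert hxy;
             first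
             | exact fun hh => hab hh
             | exact fun hh => hab hh.symm
             | exact fun hh => hav hh
             | exact fun hh => hav hh.symm
             | exact fun hh => hbv hh
             | exact fun hh => hbv hh.symm)
      rw [h1, h2]
  · -- adjacency
    intro i
    by_cases hi : (i : ℕ) < j
    · dsimp only
      rw [dif_pos hi, dif_pos hi, dif_pos hi]
      exact hadj ⟨i, hi⟩
    · dsimp only
      rw [dif_neg hi, dif_neg hi, dif_neg hi]
      constructor
      · exact hava.symm
      · exact havb
  · -- avoids A.erase v
    rintro ⟨x1, x2⟩ hc
    dsimp only at hc
    by_cases hx : (x1 : ℕ) < j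
    · rw [dif_pos hx] at hc
      exact havoid _ (Finset.mem_of_mem_erase hc)
    · rw [dif_neg hx] at hc
      rcases vec3_cases x2 with rfl | rfl | rfl
      · simp only [Matrix.cons_val_zero] at hc; exact haA (Finset.mem_of_mem_erase hc)
      · simp only [Matrix.cons_val_one, Matrix.head_cons] at hc
        exact (Finset.notMem_erase v A) hc
      · have : ![a, v, b] 2 = b := rfl
        rw [this] at hc; exact hbA (Finset.mem_of_mem_erase hc)

lemma pack_grow [Fintype V] {G : SimpleGraph V} [DecidableRel G.Adj] :
    ∀ (A : Finset V) (j : ℕ) (f : Fin j × Fin 3 → V), IsPack G j A f →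
      (∀ v ∈ A, 3 * (j + A.card) + 2 ≤ G.degree v) →
      ∃ g : Fin (j + A.card) × Fin 3 → V, IsPack G (j + A.card) ∅ g := by
  intro A
  induction A using Finset.strongInduction with
  | _ A ih =>
    intro j f hf hdeg
    rcases A.eq_empty_or_nonempty with rfl | ⟨v, hv⟩
    · simpa using ⟨f, hf⟩
    · have hdv : 3 * j + A.card + 2 ≤ G.degree v := by
        have := hdeg v hv
        omega
      obtain ⟨f', hf'⟩ := pack_extend hf hv hdv
      have hsub : A.erase v ⊂ A := Finset.erase_ssubset hv
      have hcard : (A.erase v).card = A.card - 1 := Finset.card_erase_of_mem hv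
      have hA1 : 1 ≤ A.card := Finset.card_pos.2 ⟨v, hv⟩
      have hres := ih (A.erase v) hsub (j + 1) f' hf' ?_
      · have heq : (j + 1) + (A.erase v).card = j + A.card := by omega
        rwa [heq] at hres
      · intro u hu
        have := hdeg u (Finset.mem_of_mem_erase hu)
        omega

lemma copy_of_degs [Fintype V] {G : SimpleGraph V} [DecidableRel G.Adj] {k : ℕ}
    (S : Finset V) (hS : S.card = k) (hdeg : ∀ v ∈ S, 3 * k + 2 ≤ G.degree v) :
    Copy (forestG (fun _ : Fin k => 3) (fun _ => pathG 3)) G := by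
  have hpack : IsPack G 0 S (fun x => x.1.elim0) :=
    ⟨fun x => x.1.elim0, fun i => i.elim0, fun x => x.1.elim0⟩
  have hres := pack_grow S 0 _ hpack (by intro v hv; have := hdeg v hv; omega)
  have heq : 0 + S.card = k := by omega
  rw [heq] at hres
  obtain ⟨g, hg⟩ := hres
  exact copy_of_pack hg

lemma copy_of_p3_degs [Fintype V] {G : SimpleGraph V} [DecidableRel G.Adj] {k : ℕ}
    (hk : 1 ≤ k) (D : Finset V) (hD : D.card = k - 1) {v a b : V}
    (hvD : v ∉ D) (haD : a ∉ D) (hbD : b ∉ D) (hab : a ≠ b)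
    (hva : G.Adj v a) (hvb : G.Adj v b)
    (hdeg : ∀ u ∈ D, 3 * k + 2 ≤ G.degree u) :
    Copy (forestG (fun _ : Fin k => 3) (fun _ => pathG 3)) G := by
  have hav : a ≠ v := fun h => G.irrefl (h ▸ hva)
  have hbv : b ≠ v := fun h => G.irrefl (h ▸ hvb)
  have h3 : Function.Injective (fun c : Fin 3 => ![a, v, b] c) := by
    intro c d hcd
    rcases vec3_cases c with rfl | rfl | rfl <;> rcases vec3_cases d with rfl | rfl | rfl <;>
      simp only [Matrix.cons_val_zero, Matrix.cons_val_one, Matrix.head_cons] at hcd <;>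
      first
      | rfl
      | (exfalso; revert hcd;
         first
         | exact fun hh => hab hh
         | exact fun hh => hab hh.symm
         | exact fun hh => hav hh
         | exact fun hh => hav hh.symm
         | exact fun hh => hbv hh
         | exact fun hh => hbv hh.symm)
  have hpack : IsPack G 1 D (fun x => ![a, v, b] x.2) := by
    refine ⟨?_, ?_, ?_⟩
    · rintro ⟨x1, x2⟩ ⟨y1, y2⟩ hxy
      dsimp at hxy
      have h2 := h3 hxy
      have h1 : x1 = y1 := Subsingleton.elim x1 y1
      rw [h1, h2]
    · intro i
      refine ⟨?_, ?_⟩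
      · show G.Adj (![a, v, b] 0) (![a, v, b] 1)
        simpa using hva.symm
      · show G.Adj (![a, v, b] 1) (![a, v, b] 2)
        have : ![a, v, b] 2 = b := rfl
        rw [this]; simpa using hvb
    · rintro ⟨x1, x2⟩ hc
      dsimp at hc
      rcases vec3_cases x2 with rfl | rfl | rfl
      · simp only [Matrix.cons_val_zero] at hc; exact haD hc
      · simp only [Matrix.cons_val_one, Matrix.head_cons] at hc; exact hvD hc
      · have : ![a, v, b] 2 = b := rfl
        rw [this] at hc; exact hbD hc
  have hres := pack_grow D 1 _ hpack ?_
  · have heq : 1 + D.card = k := by omega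
    rw [heq] at hres
    obtain ⟨g, hg⟩ := hres
    exact copy_of_pack hg
  · intro u hu
    have := hdeg u hu
    omega

end FreePack
section MatchEquiv

lemma match_equiv {V : Type*} [Fintype V] [LinearOrder V] [DecidableEq V] (s : Finset V) (σ : V → V) (m : ℕ)
    (hcard : s.card = m)
    (hmem : ∀ v ∈ s, σ v ∈ s)
    (hinv : ∀ v ∈ s, σ (σ v) = v)
    (hfix : (s.filter (fun v => σ v = v)).card = m % 2) :
    ∃ e : {x // x ∈ s} ≃ Fin m,
      ∀ v w : {x // x ∈ s},
        (σ (v : V) = (w : V) ∧ v ≠ w) ↔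
          (((e v : Fin m) : ℕ) / 2 = ((e w : Fin m) : ℕ) / 2 ∧ e v ≠ e w) := by
  set R := s.filter (fun v => v < σ v) with hRdef
  set R' := s.filter (fun v => σ v < v) with hR'def
  set F := s.filter (fun v => σ v = v) with hFdef
  -- R and R' have the same cardinality
  have hRR' : R.card = R'.card := by
    apply Finset.card_bij (fun v _ => σ v)
    · intro a ha
      rw [hRdef, Finset.mem_filter] at ha
      rw [hR'def, Finset.mem_filter]
      exact ⟨hmem a ha.1, by rw [hinv a ha.1]; exact ha.2⟩
    · intro a ha b hb hab
      rw [hRdef, Finset.mem_filter] at ha hb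
      calc a = σ (σ a) := (hinv a ha.1).symm
      _ = σ (σ b) := by rw [hab]
      _ = b := hinv b hb.1
    · intro b hb
      rw [hR'def, Finset.mem_filter] at hb
      refine ⟨σ b, ?_, hinv b hb.1⟩
      rw [hRdef, Finset.mem_filter]
      exact ⟨hmem b hb.1, by rw [hinv b hb.1]; exact hb.2⟩
  have hpart : R.card + R'.card + F.card = m := by
    have h1 := Finset.card_filter_add_card_filter_not
      (s := s) (p := fun v => v < σ v)
    set T := s.filter (fun v => ¬ v < σ v) with hTdef
    have h2 := Finset.card_filter_add_card_filter_not
      (s := T) (p := fun v => σ v < v)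
    have e1 : T.filter (fun v => σ v < v) = R' := by
      ext v
      rw [hTdef, hR'def, Finset.mem_filter, Finset.mem_filter, Finset.mem_filter]
      constructor
      · rintro ⟨⟨h, -⟩, h'⟩; exact ⟨h, h'⟩
      · rintro ⟨h, h'⟩; exact ⟨⟨h, asymm h'⟩, h'⟩
    have e2 : T.filter (fun v => ¬ σ v < v) = F := by
      ext v
      rw [hTdef, hFdef, Finset.mem_filter, Finset.mem_filter, Finset.mem_filter]
      constructor
      · rintro ⟨⟨h, h1'⟩, h2'⟩
        exact ⟨h, le_antisymm (le_of_not_gt h1') (le_of_not_gt h2')⟩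
      · rintro ⟨h, h'⟩
        exact ⟨⟨h, by rw [h']; exact lt_irrefl v⟩, by rw [h']; exact lt_irrefl v⟩
    rw [e1, e2] at h2
    rw [← hcard, ← h1, ← h2]
    ring
  have hfix1 : F.card ≤ 1 := by rw [hfix]; omega
  have hRcard : R.card = m / 2 := by omega
  set eR := Finset.equivFinOfCardEq hRcard with heRdef
  -- facts about membership
  have memR_of_lt : ∀ v : {x // x ∈ s}, (v : V) < σ (v : V) → (v : V) ∈ R := by
    intro v h
    rw [hRdef, Finset.mem_filter]
    exact ⟨v.2, h⟩
  have memR_of_gt : ∀ v : {x // x ∈ s}, σ (v : V) < (v : V) → σ (v : V) ∈ R := by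
    intro v h
    rw [hRdef, Finset.mem_filter]
    exact ⟨hmem _ v.2, by rw [hinv _ v.2]; exact h⟩
  have lt_trichot : ∀ v : {x // x ∈ s}, ¬ σ (v : V) = (v : V) → ¬ (v : V) < σ (v : V) →
      σ (v : V) < (v : V) := by
    intro v h1 h2
    rcases lt_trichotomy (σ (v : V)) (v : V) with h | h | h
    · exact h
    · exact absurd h h1
    · exact absurd h h2
  have hmodd : ∀ v : {x // x ∈ s}, σ (v : V) = (v : V) → m % 2 = 1 := by
    intro v h
    have hv : (v : V) ∈ F := by
      rw [hFdef, Finset.mem_filter]; exact ⟨v.2, h⟩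
    have : 1 ≤ F.card := Finset.card_pos.2 ⟨_, hv⟩
    omega
  -- the map
  have hbound1 : ∀ q : Fin (m / 2), 2 * (q : ℕ) < m := fun q => by have := q.is_lt; omega
  have hbound2 : ∀ q : Fin (m / 2), 2 * (q : ℕ) + 1 < m := fun q => by have := q.is_lt; omega
  set g : {x // x ∈ s} → Fin m := fun v =>
    if hf : σ (v : V) = (v : V) then
      ⟨m - 1, by have := hmodd v hf; omega⟩
    else if hlt : (v : V) < σ (v : V) then
      ⟨2 * (eR ⟨(v : V), memR_of_lt v hlt⟩ : ℕ), hbound1 _⟩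
    else
      ⟨2 * (eR ⟨σ (v : V), memR_of_gt v (lt_trichot v hf hlt)⟩ : ℕ) + 1, hbound2 _⟩
    with hgdef
  -- master form fact
  have hform : ∀ v : {x // x ∈ s},
      (σ (v : V) = (v : V) ∧ (g v : ℕ) = m - 1 ∧ m % 2 = 1) ∨
      (∃ hv : (v : V) ∈ R, σ (v : V) ≠ (v : V) ∧ (v : V) < σ (v : V) ∧
        (g v : ℕ) = 2 * (eR ⟨(v : V), hv⟩ : ℕ)) ∨
      (∃ hv : σ (v : V) ∈ R, σ (v : V) ≠ (v : V) ∧ σ (v : V) < (v : V) ∧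
        (g v : ℕ) = 2 * (eR ⟨σ (v : V), hv⟩ : ℕ) + 1) := by
    intro v
    by_cases hf : σ (v : V) = (v : V)
    · left
      refine ⟨hf, ?_, hmodd v hf⟩
      rw [hgdef]; simp only [dif_pos hf]
    · by_cases hlt : (v : V) < σ (v : V)
      · right; left
        refine ⟨memR_of_lt v hlt, hf, hlt, ?_⟩
        rw [hgdef]; simp only [dif_neg hf, dif_pos hlt]
      · right; right
        refine ⟨memR_of_gt v (lt_trichot v hf hlt), hf, lt_trichot v hf hlt, ?_⟩
        rw [hgdef]; simp only [dif_neg hf, dif_neg hlt]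
  have hFuniq : ∀ v w : {x // x ∈ s}, σ (v : V) = (v : V) → σ (w : V) = (w : V) → v = w := by
    intro v w hv hw
    have h1 : (v : V) ∈ F := by rw [hFdef, Finset.mem_filter]; exact ⟨v.2, hv⟩
    have h2 : (w : V) ∈ F := by rw [hFdef, Finset.mem_filter]; exact ⟨w.2, hw⟩
    exact Subtype.ext (Finset.card_le_one.1 hfix1 _ h1 _ h2)
  have heRinj : ∀ (a b : {x // x ∈ R}), eR a = eR b → (a : V) = (b : V) := by
    intro a b h
    have := eR.injective h
    exact congrArg Subtype.val this
  -- injectivity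
  have hginj : Function.Injective g := by
    intro u v huv
    have hval : (g u : ℕ) = (g v : ℕ) := congrArg Fin.val huv
    rcases hform u with ⟨hfu, hgu, hm2⟩ | ⟨hu, hfu, hltu, hgu⟩ | ⟨hu, hfu, hltu, hgu⟩ <;>
      rcases hform v with ⟨hfv, hgv, hm2'⟩ | ⟨hv, hfv, hltv, hgv⟩ | ⟨hv, hfv, hltv, hgv⟩
    · exact hFuniq u v hfu hfv
    · exfalso
      have hq := (eR ⟨(v : V), hv⟩).is_lt
      omega
    · exfalso
      have hq := (eR ⟨σ (v : V), hv⟩).is_lt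
      omega
    · exfalso
      have hq := (eR ⟨(u : V), hu⟩).is_lt
      omega
    · have hq : eR ⟨(u : V), hu⟩ = eR ⟨(v : V), hv⟩ := Fin.ext (by omega)
      exact Subtype.ext (heRinj _ _ hq)
    · exfalso; omega
    · exfalso
      have hq := (eR ⟨σ (u : V), hu⟩).is_lt
      omega
    · exfalso; omega
    · have hq : eR ⟨σ (u : V), hu⟩ = eR ⟨σ (v : V), hv⟩ := Fin.ext (by omega)
      have h1 : σ (u : V) = σ (v : V) := heRinj _ _ hq
      have : (u : V) = (v : V) := by
        calc (u : V) = σ (σ (u : V)) := (hinv _ u.2).symm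
        _ = σ (σ (v : V)) := by rw [h1]
        _ = (v : V) := hinv _ v.2
      exact Subtype.ext this
  have hgbij : Function.Bijective g := by
    rw [Fintype.bijective_iff_injective_and_card]
    refine ⟨hginj, ?_⟩
    rw [Fintype.card_coe, hcard, Fintype.card_fin]
  refine ⟨Equiv.ofBijective g hgbij, ?_⟩
  intro v w
  have hev : (Equiv.ofBijective g hgbij) v = g v := rfl
  have hew : (Equiv.ofBijective g hgbij) w = g w := rfl
  rw [hev, hew]
  constructor
  · rintro ⟨hσ, hne⟩
    have hnev : (v : V) ≠ (w : V) := fun h => hne (Subtype.ext h)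
    have hgne : g v ≠ g w := fun h => hne (hginj h)
    refine ⟨?_, hgne⟩
    rcases hform v with ⟨hfv, hgv, hm2⟩ | ⟨hv, hfv, hltv, hgv⟩ | ⟨hv, hfv, hltv, hgv⟩
    · exact absurd (hfv.symm.trans hσ) hnev
    · -- v < σ v = w, so w is in "gt" form with σ w = v
      have hσw : σ (w : V) = (v : V) := by rw [← hσ, hinv _ v.2]
      rcases hform w with ⟨hfw, hgw, hm2'⟩ | ⟨hw, hfw, hltw, hgw⟩ | ⟨hw, hfw, hltw, hgw⟩
      · exfalso
        have hwv : (w : V) = (v : V) := hfw.symm.trans hσw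
        rw [hσ, hwv] at hltv
        exact lt_irrefl _ hltv
      · exfalso
        rw [hσw] at hltw
        rw [hσ] at hltv
        exact lt_asymm hltv hltw
      · have : (⟨σ (w : V), hw⟩ : {x // x ∈ R}) = ⟨(v : V), hv⟩ := Subtype.ext hσw
        rw [this] at hgw
        omega
    · -- σ v < v, σ v = w, so w is in "lt" form
      have hσw : σ (w : V) = (v : V) := by rw [← hσ, hinv _ v.2]
      rcases hform w with ⟨hfw, hgw, hm2'⟩ | ⟨hw, hfw, hltw, hgw⟩ | ⟨hw, hfw, hltw, hgw⟩
      · exfalso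
        have hwv : (w : V) = (v : V) := hfw.symm.trans hσw
        rw [hσ, hwv] at hltv
        exact lt_irrefl _ hltv
      · have : (⟨σ (v : V), hv⟩ : {x // x ∈ R}) = ⟨(w : V), hw⟩ := Subtype.ext hσ
        rw [this] at hgv
        omega
      · exfalso
        rw [hσw] at hltw
        rw [hσ] at hltv
        exact lt_asymm hltv hltw
  · rintro ⟨hblk, hne⟩
    have hnevw : v ≠ w := fun h => hne (by rw [h])
    refine ⟨?_, hnevw⟩
    rcases hform v with ⟨hfv, hgv, hm2⟩ | ⟨hv, hfv, hltv, hgv⟩ | ⟨hv, hfv, hltv, hgv⟩ <;>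
      rcases hform w with ⟨hfw, hgw, hm2'⟩ | ⟨hw, hfw, hltw, hgw⟩ | ⟨hw, hfw, hltw, hgw⟩
    · exact absurd (hFuniq v w hfv hfw) hnevw
    · exfalso
      have hq := (eR ⟨(w : V), hw⟩).is_lt
      omega
    · exfalso
      have hq := (eR ⟨σ (w : V), hw⟩).is_lt
      omega
    · exfalso
      have hq := (eR ⟨(v : V), hv⟩).is_lt
      omega
    · exfalso
      have hq : eR ⟨(v : V), hv⟩ = eR ⟨(w : V), hw⟩ := Fin.ext (by omega)
      have h1 : (v : V) = (w : V) := heRinj _ _ hq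
      exact hnevw (Subtype.ext h1)
    · -- v lt, w gt: σ w = v hence σ v = w
      have hq : eR ⟨(v : V), hv⟩ = eR ⟨σ (w : V), hw⟩ := Fin.ext (by omega)
      have h1 : (v : V) = σ (w : V) := heRinj _ _ hq
      rw [h1, hinv _ w.2]
    · exfalso
      have hq := (eR ⟨σ (v : V), hv⟩).is_lt
      omega
    · have hq : eR ⟨σ (v : V), hv⟩ = eR ⟨(w : V), hw⟩ := Fin.ext (by omega)
      exact heRinj _ _ hq
    · exfalso
      have hq : eR ⟨σ (v : V), hv⟩ = eR ⟨σ (w : V), hw⟩ := Fin.ext (by omega)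
      have h1 : σ (v : V) = σ (w : V) := heRinj _ _ hq
      have : (v : V) = (w : V) := by
        calc (v : V) = σ (σ (v : V)) := (hinv _ v.2).symm
        _ = σ (σ (w : V)) := by rw [h1]
        _ = (w : V) := hinv _ w.2
      exact hnevw (Subtype.ext this)

end MatchEquiv
section BuildIso
open SimpleGraph

lemma arith1 {k p n : ℕ} (hk : 2 ≤ k) (hp : 2 ≤ p) (hn : (3 * k + 2) ^ 3 ≤ n) :
    n * (3 * k + 1) ^ p < (n - 1) ^ p := by
  set c := 3 * k + 1 with hc
  have hc7 : 7 ≤ c := by omega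
  have hcube : c + 1 ≤ (c + 1) ^ 3 := Nat.le_self_pow (by norm_num) _
  have hc1 : c + 1 = 3 * k + 2 := by omega
  have hn2 : (c + 1) ^ 3 ≤ n := by rw [hc1]; exact hn
  have hn' : c + 1 ≤ n := le_trans hcube hn2
  have hcn : c ≤ n - 1 := by omega
  have hp' : p = (p - 2) + 2 := by omega
  have h1 : c ^ (p - 2) ≤ (n - 1) ^ (p - 2) := Nat.pow_le_pow_left hcn _
  have h2 : n * c ^ 2 < (n - 1) ^ 2 := by
    have ha : (c + 1) ^ 3 - 1 ≥ 7 * c ^ 2 := by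
      have : c ^ 3 ≥ 7 * c ^ 2 := by
        calc c ^ 3 = c * c ^ 2 := by ring
        _ ≥ 7 * c ^ 2 := Nat.mul_le_mul_right _ hc7
      have hexp : (c + 1) ^ 3 = c ^ 3 + 3 * c ^ 2 + 3 * c + 1 := by ring
      omega
    have hb : n - 1 ≥ (c + 1) ^ 3 - 1 := by omega
    have hcpos : 0 < c ^ 2 := pow_pos (by omega) _
    calc n * c ^ 2 < (7 * (n - 1)) * c ^ 2 := by
          have h7 : n < 7 * (n - 1) := by omega
          exact mul_lt_mul_of_pos_right h7 hcpos
    _ = (n - 1) * (7 * c ^ 2) := by ring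
    _ ≤ (n - 1) * ((c + 1) ^ 3 - 1) := Nat.mul_le_mul_left _ ha
    _ ≤ (n - 1) * (n - 1) := Nat.mul_le_mul_left _ (by omega)
    _ = (n - 1) ^ 2 := by ring
  calc n * c ^ p = n * (c ^ (p - 2) * c ^ 2) := by rw [← pow_add, ← hp']
  _ = c ^ (p - 2) * (n * c ^ 2) := by ring
  _ < c ^ (p - 2) * (n - 1) ^ 2 :=
      mul_lt_mul_of_pos_left h2 (pow_pos (by omega) _)
  _ ≤ (n - 1) ^ (p - 2) * (n - 1) ^ 2 := Nat.mul_le_mul_right _ h1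
  _ = (n - 1) ^ p := by rw [← pow_add, ← hp']

lemma build_iso {n k : ℕ} (hk : 2 ≤ k) (hkn : k ≤ n)
    (G : SimpleGraph (Fin n)) [DecidableRel G.Adj]
    (D : Finset (Fin n)) (hD : D.card = k - 1)
    (hfull : ∀ d ∈ D, ∀ w, w ≠ d → G.Adj d w)
    (hsdiff1 : ∀ v ∈ Dᶜ, (G.neighborFinset v \ D).card ≤ 1)
    (hfixcount : (Dᶜ.filter (fun v => (G.neighborFinset v \ D).card = 0)).card
      = (n - (k - 1)) % 2) :
    Nonempty (G ≃g joinG (⊤ : SimpleGraph (Fin (k - 1))) (matchG (n - (k - 1)))) := by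
  classical
  set m := n - (k - 1) with hm
  set σ : Fin n → Fin n := fun v =>
    if h : (G.neighborFinset v \ D).Nonempty then h.choose else v with hσdef
  have hσ_mem : ∀ v, (G.neighborFinset v \ D).Nonempty →
      σ v ∈ G.neighborFinset v \ D := by
    intro v h
    rw [hσdef]
    simp only [dif_pos h]
    exact h.choose_spec
  have hσ_id : ∀ v, ¬ (G.neighborFinset v \ D).Nonempty → σ v = v := by
    intro v h
    rw [hσdef]
    simp only [dif_neg h]
  -- characterization on Dᶜ
  have hchar : ∀ v ∈ Dᶜ, ∀ w, w ∈ G.neighborFinset v \ D ↔ (σ v = w ∧ σ v ≠ v) := by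
    intro v hv w
    constructor
    · intro hw
      have hne : (G.neighborFinset v \ D).Nonempty := ⟨w, hw⟩
      have h1 := hσ_mem v hne
      have h2 : w = σ v := by
        have := Finset.card_le_one.1 (hsdiff1 v hv) _ hw _ h1
        exact this
      refine ⟨h2.symm, ?_⟩
      intro hc
      have : v ∈ G.neighborFinset v := by
        have := h1
        rw [hc] at this
        exact (Finset.mem_sdiff.1 this).1
      rw [SimpleGraph.mem_neighborFinset] at this
      exact G.irrefl this
    · rintro ⟨h1, h2⟩
      by_cases hne : (G.neighborFinset v \ D).Nonempty
      · rw [← h1]; exact hσ_mem v hne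
      · exact (h2 (hσ_id v hne)).elim
  have hσO : ∀ v ∈ Dᶜ, σ v ∈ Dᶜ := by
    intro v hv
    by_cases hne : (G.neighborFinset v \ D).Nonempty
    · have := hσ_mem v hne
      rw [Finset.mem_sdiff] at this
      exact Finset.mem_compl.2 this.2
    · rw [hσ_id v hne]; exact hv
  have hσinv : ∀ v ∈ Dᶜ, σ (σ v) = v := by
    intro v hv
    by_cases hne : (G.neighborFinset v \ D).Nonempty
    · have h1 := hσ_mem v hne
      rw [Finset.mem_sdiff, SimpleGraph.mem_neighborFinset] at h1
      have hσvO : σ v ∈ Dᶜ := Finset.mem_compl.2 h1.2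
      have hvmem : v ∈ G.neighborFinset (σ v) \ D := by
        rw [Finset.mem_sdiff, SimpleGraph.mem_neighborFinset]
        exact ⟨h1.1.symm, Finset.mem_compl.1 hv⟩
      exact ((hchar (σ v) hσvO v).1 hvmem).1
    · rw [hσ_id v hne, hσ_id v hne]
  have hcardO : (Dᶜ : Finset (Fin n)).card = m := by
    rw [Finset.card_compl, hD, Fintype.card_fin, hm]
  have hfix' : ((Dᶜ : Finset (Fin n)).filter (fun v => σ v = v)).card = m % 2 := by
    rw [← hfixcount]
    congr 1
    apply Finset.filter_congr
    intro v hv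
    constructor
    · intro h
      by_contra hc
      have hne : (G.neighborFinset v \ D).Nonempty :=
        Finset.card_pos.1 (Nat.pos_of_ne_zero hc)
      exact ((hchar v hv (σ v)).1 (hσ_mem v hne)).2 h
    · intro h
      apply hσ_id
      rw [Finset.card_eq_zero] at h
      rw [h]
      exact Finset.not_nonempty_empty
  obtain ⟨e, he⟩ := match_equiv (Dᶜ : Finset (Fin n)) σ m hcardO hσO hσinv hfix'
  set eD : {x // x ∈ D} ≃ Fin (k - 1) := D.equivFinOfCardEq hD with heD
  have hcards : Fintype.card (Fin n) = Fintype.card (Fin (k - 1) ⊕ Fin m) := by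
    rw [Fintype.card_fin, Fintype.card_sum, Fintype.card_fin, Fintype.card_fin, hm]
    omega
  set f : Fin n → Fin (k - 1) ⊕ Fin m := fun v =>
    if h : v ∈ D then Sum.inl (eD ⟨v, h⟩)
    else Sum.inr (e ⟨v, Finset.mem_compl.2 h⟩) with hfdef
  have hf_pos : ∀ v (h : v ∈ D), f v = Sum.inl (eD ⟨v, h⟩) := by
    intro v h
    rw [hfdef]
    simp only [dif_pos h]
  have hf_neg : ∀ v (h : ¬ v ∈ D), f v = Sum.inr (e ⟨v, Finset.mem_compl.2 h⟩) := by
    intro v h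
    rw [hfdef]
    simp only [dif_neg h]
  have hfinj : Function.Injective f := by
    intro u v huv
    by_cases hu : u ∈ D <;> by_cases hv : v ∈ D
    · rw [hf_pos u hu, hf_pos v hv] at huv
      have := eD.injective (Sum.inl_injective huv)
      exact congrArg Subtype.val this
    · rw [hf_pos u hu, hf_neg v hv] at huv
      exact absurd huv (by simp)
    · rw [hf_neg u hu, hf_pos v hv] at huv
      exact absurd huv (by simp)
    · rw [hf_neg u hu, hf_neg v hv] at huv
      have := e.injective (Sum.inr_injective huv)
      exact congrArg Subtype.val this
  have hfbij : Function.Bijective f :=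
    (Fintype.bijective_iff_injective_and_card f).2 ⟨hfinj, hcards⟩
  set φ : Fin n ≃ Fin (k - 1) ⊕ Fin m := Equiv.ofBijective f hfbij with hφ
  have hφ_pos : ∀ v (h : v ∈ D), φ v = Sum.inl (eD ⟨v, h⟩) := fun v h => hf_pos v h
  have hφ_neg : ∀ v (h : ¬ v ∈ D), φ v = Sum.inr (e ⟨v, Finset.mem_compl.2 h⟩) :=
    fun v h => hf_neg v h
  -- adjacency on outside pairs
  have hadj_out : ∀ u v : Fin n, u ∈ Dᶜ → v ∈ Dᶜ → (G.Adj u v ↔ (σ u = v ∧ u ≠ v)) := by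
    intro u v hu hv
    constructor
    · intro h
      have : v ∈ G.neighborFinset u \ D := by
        rw [Finset.mem_sdiff, SimpleGraph.mem_neighborFinset]
        exact ⟨h, Finset.mem_compl.1 hv⟩
      obtain ⟨h1, h2⟩ := (hchar u hu v).1 this
      exact ⟨h1, G.ne_of_adj h⟩
    · rintro ⟨h1, h2⟩
      have hσu : σ u ≠ u := by rw [h1]; exact fun hc => h2 hc.symm
      have : σ u ∈ G.neighborFinset u \ D := (hchar u hu (σ u)).2 ⟨rfl, hσu⟩
      rw [Finset.mem_sdiff, SimpleGraph.mem_neighborFinset] at this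
      rw [← h1]
      exact this.1
  refine ⟨⟨φ, ?_⟩⟩
  intro u v
  by_cases hu : u ∈ D <;> by_cases hv : v ∈ D
  · rw [hφ_pos u hu, hφ_pos v hv, joinG_top_adj_ll]
    constructor
    · intro h
      have huv : u ≠ v := by
        intro hc
        subst hc
        exact h rfl
      exact hfull u hu v (Ne.symm huv)
    · intro h hc
      have h2 : (⟨u, hu⟩ : {x // x ∈ D}) = ⟨v, hv⟩ := eD.injective hc
      exact G.ne_of_adj h (congrArg Subtype.val h2)
  · rw [hφ_pos u hu, hφ_neg v hv]
    simp only [joinG_top_adj_lr, true_iff]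
    exact hfull u hu v (fun hc => hv (hc ▸ hu))
  · rw [hφ_neg u hu, hφ_pos v hv]
    constructor
    · intro _
      exact (hfull v hv u (fun hc => hu (hc ▸ hv))).symm
    · intro _
      exact ((joinG_top_adj_lr (H := matchG m))).symm
  · rw [hφ_neg u hu, hφ_neg v hv, joinG_top_adj_rr, matchG_adj]
    have hu' : u ∈ Dᶜ := Finset.mem_compl.2 hu
    have hv' : v ∈ Dᶜ := Finset.mem_compl.2 hv
    rw [hadj_out u v hu' hv']
    have hprop := he ⟨u, Finset.mem_compl.2 hu⟩ ⟨v, Finset.mem_compl.2 hv⟩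
    constructor
    · rintro ⟨h1, h2⟩
      have h3 := hprop.2 ⟨h2, h1⟩
      exact ⟨h3.1, fun hc => h3.2 (Subtype.ext hc)⟩
    · rintro ⟨h1, h2⟩
      have h3 := hprop.1 ⟨h1, fun hc => h2 (congrArg Subtype.val hc)⟩
      exact ⟨h3.2, h3.1⟩

end BuildIso
section MainCore
open SimpleGraph

lemma eq_of_pow_eq {a c p : ℕ} (hp : p ≠ 0) (hle : a ≤ c) (h : a ^ p = c ^ p) : a = c := by
  by_contra hne
  have : a < c := lt_of_le_of_ne hle hne
  exact absurd h (Nat.ne_of_lt (Nat.pow_lt_pow_left this hp))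

lemma main_core {n k p : ℕ} (hk : 2 ≤ k) (hp : 2 ≤ p) (hn : (3 * k + 2) ^ 3 ≤ n)
    (G : SimpleGraph (Fin n)) [DecidableRel G.Adj]
    (hfree : Free (forestG (fun _ : Fin k => 3) (fun _ => pathG 3)) G) :
    ep p G ≤ ep p (joinG (⊤ : SimpleGraph (Fin (k - 1))) (matchG (n - (k - 1)))) ∧
      (ep p G = ep p (joinG (⊤ : SimpleGraph (Fin (k - 1))) (matchG (n - (k - 1)))) →
        Nonempty (G ≃g joinG (⊤ : SimpleGraph (Fin (k - 1))) (matchG (n - (k - 1))))) := by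
  have hkn : 3 * k + 2 ≤ n := le_trans (Nat.le_self_pow (by norm_num) _) hn
  set m := n - (k - 1) with hm
  have hval : ep p (joinG (⊤ : SimpleGraph (Fin (k - 1))) (matchG m)) =
      (k - 1) * (n - 1) ^ p + (m - m % 2) * k ^ p + (m % 2) * (k - 1) ^ p := by
    rw [ep_target]
    have h1 : (k - 1) + m - 1 = n - 1 := by omega
    have h2 : (k - 1) + 1 = k := by omega
    rw [h1, h2]
  have hepG : ep p G = ∑ v : Fin n, (G.degree v) ^ p :=
    Finset.sum_congr rfl fun v _ => by rw [degp_eq_degree]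
  set D := Finset.univ.filter (fun v => 3 * k + 2 ≤ G.degree v) with hDdef
  have hDmem : ∀ v, v ∈ D ↔ 3 * k + 2 ≤ G.degree v := fun v => by
    rw [hDdef]; simp
  have hDc : D.card ≤ k - 1 := by
    by_contra hc
    push_neg at hc
    have hk' : k ≤ D.card := by omega
    obtain ⟨S, hSD, hSc⟩ := Finset.exists_subset_card_eq hk'
    exact hfree (copy_of_degs S hSc (fun v hv => (hDmem v).1 (hSD hv)))
  have hdegall : ∀ v : Fin n, G.degree v ≤ n - 1 := fun v => by
    have := G.degree_lt_card_verts v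
    rw [Fintype.card_fin] at this
    omega
  have hsplit : ep p G = ∑ v ∈ D, (G.degree v) ^ p + ∑ v ∈ Dᶜ, (G.degree v) ^ p := by
    rw [hepG, ← Finset.sum_add_sum_compl D]
  have hDsum : ∑ v ∈ D, (G.degree v) ^ p ≤ D.card * (n - 1) ^ p := by
    have := Finset.sum_le_card_nsmul D (fun v => (G.degree v) ^ p) ((n - 1) ^ p)
      (fun v _ => Nat.pow_le_pow_left (hdegall v) p)
    simpa using this
  by_cases hDk : D.card = k - 1
  swap
  · -- small D: strict inequality
    have hDk2 : D.card ≤ k - 2 := by omega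
    have hOsum : ∑ v ∈ Dᶜ, (G.degree v) ^ p ≤ n * (3 * k + 1) ^ p := by
      calc ∑ v ∈ Dᶜ, (G.degree v) ^ p ≤ Dᶜ.card * (3 * k + 1) ^ p := by
            have := Finset.sum_le_card_nsmul Dᶜ (fun v => (G.degree v) ^ p) ((3 * k + 1) ^ p)
              (fun v hv => Nat.pow_le_pow_left
                (by
                  have h' : ¬ 3 * k + 2 ≤ G.degree v :=
                    fun hh => Finset.mem_compl.1 hv ((hDmem v).2 hh)
                  omega) p)
            simpa using this
      _ ≤ n * (3 * k + 1) ^ p := by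
            apply Nat.mul_le_mul_right
            calc Dᶜ.card ≤ Fintype.card (Fin n) := Finset.card_le_univ _
            _ = n := Fintype.card_fin n
    have hlt : ep p G < (k - 1) * (n - 1) ^ p := by
      have ha := arith1 hk hp hn
      have hb : D.card * (n - 1) ^ p ≤ (k - 2) * (n - 1) ^ p :=
        Nat.mul_le_mul_right _ hDk2
      have hc : (k - 2) * (n - 1) ^ p + (n - 1) ^ p = (k - 1) * (n - 1) ^ p := by
        have hk1 : k - 1 = (k - 2) + 1 := by omega
        rw [hk1, Nat.succ_mul]
      calc ep p G = ∑ v ∈ D, (G.degree v) ^ p + ∑ v ∈ Dᶜ, (G.degree v) ^ p := hsplit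
      _ ≤ (k - 2) * (n - 1) ^ p + n * (3 * k + 1) ^ p :=
          add_le_add (le_trans hDsum hb) hOsum
      _ < (k - 2) * (n - 1) ^ p + (n - 1) ^ p := Nat.add_lt_add_left ha _
      _ = (k - 1) * (n - 1) ^ p := hc
    have hle2 : (k - 1) * (n - 1) ^ p ≤
        ep p (joinG (⊤ : SimpleGraph (Fin (k - 1))) (matchG m)) := by
      rw [hval]
      omega
    refine ⟨le_of_lt (lt_of_lt_of_le hlt hle2), fun he => ?_⟩
    exact absurd he (Nat.ne_of_lt (lt_of_lt_of_le hlt hle2))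
  · -- D.card = k - 1
    have hOcard : (Dᶜ : Finset (Fin n)).card = m := by
      rw [Finset.card_compl, hDk, Fintype.card_fin]
    have hsd1 : ∀ v ∈ Dᶜ, (G.neighborFinset v \ D).card ≤ 1 := by
      intro v hv
      by_contra hc
      have h2 : 1 < (G.neighborFinset v \ D).card := by omega
      obtain ⟨a, ha, b, hb, hab⟩ := Finset.one_lt_card.mp h2
      rw [Finset.mem_sdiff, SimpleGraph.mem_neighborFinset] at ha hb
      exact hfree (copy_of_p3_degs (by omega) D hDk (Finset.mem_compl.1 hv) ha.2 hb.2 hab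
        ha.1 hb.1 (fun u hu => (hDmem u).1 hu))
    have hay : ∀ v ∈ Dᶜ, (G.neighborFinset v ∩ D).card + (G.neighborFinset v \ D).card
        = G.degree v := by
      intro v _
      rw [← SimpleGraph.card_neighborFinset_eq_degree]
      exact Finset.card_inter_add_card_sdiff _ _
    have hinterle : ∀ v : Fin n, (G.neighborFinset v ∩ D).card ≤ k - 1 := fun v =>
      hDk ▸ Finset.card_le_card Finset.inter_subset_right
    have houtdeg : ∀ v ∈ Dᶜ, G.degree v ≤ k := by
      intro v hv
      have h1 := hay v hv
      have h2 := hinterle v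
      have h3 := hsd1 v hv
      omega
    -- common equality-structure builder
    have hbuild : (∀ d ∈ D, G.degree d = n - 1) → (∀ v ∈ Dᶜ, G.degree v = k ∨
        (G.degree v = k - 1 ∧ m % 2 = 1)) →
        ((Dᶜ : Finset (Fin n)).filter (fun v => G.degree v = k - 1)).card = m % 2 →
        Nonempty (G ≃g joinG (⊤ : SimpleGraph (Fin (k - 1))) (matchG m)) := by
      intro hDfull hOdeg hOcount
      have hfull : ∀ d ∈ D, ∀ w, w ≠ d → G.Adj d w := by
        intro d hd w hw
        exact adj_of_deg_full G (by rw [hDfull d hd, Fintype.card_fin]) hw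
      have hDsubN : ∀ v ∈ Dᶜ, (G.neighborFinset v ∩ D) = D := by
        intro v hv
        apply Finset.Subset.antisymm Finset.inter_subset_right
        intro d hd
        rw [Finset.mem_inter]
        refine ⟨?_, hd⟩
        rw [SimpleGraph.mem_neighborFinset]
        exact (hfull d hd v (fun hc => (Finset.mem_compl.1 hv) (hc ▸ hd))).symm
      have hsdval : ∀ v ∈ Dᶜ, (G.neighborFinset v \ D).card = G.degree v - (k - 1) := by
        intro v hv
        have h1 := hay v hv
        have h2 : (G.neighborFinset v ∩ D).card = k - 1 := by rw [hDsubN v hv, hDk]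
        omega
      have hfixcount : ((Dᶜ : Finset (Fin n)).filter
          (fun v => (G.neighborFinset v \ D).card = 0)).card = m % 2 := by
        rw [← hOcount]
        congr 1
        apply Finset.filter_congr
        intro v hv
        rw [hsdval v hv]
        rcases hOdeg v hv with h | ⟨h, _⟩ <;> rw [h] <;>
          constructor <;> intro h' <;> omega
      exact build_iso hk (by omega) G D hDk hfull hsd1 hfixcount
    by_cases hpar : m % 2 = 0
    · -- even case
      have hOsum : ∑ v ∈ Dᶜ, (G.degree v) ^ p ≤ m * k ^ p := by
        have := Finset.sum_le_card_nsmul Dᶜ (fun v => (G.degree v) ^ p) (k ^ p)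
          (fun v hv => Nat.pow_le_pow_left (houtdeg v hv) p)
        rw [hOcard] at this
        simpa using this
      have hvaleq : ep p (joinG (⊤ : SimpleGraph (Fin (k - 1))) (matchG m)) =
          (k - 1) * (n - 1) ^ p + m * k ^ p := by
        rw [hval, hpar]
        simp
      constructor
      · rw [hvaleq, hsplit]
        rw [hDk] at hDsum
        omega
      · intro he
        rw [hvaleq, hsplit] at he
        rw [hDk] at hDsum
        have hDeq : ∑ v ∈ D, (G.degree v) ^ p = (k - 1) * (n - 1) ^ p := by omega
        have hOeq : ∑ v ∈ Dᶜ, (G.degree v) ^ p = m * k ^ p := by omega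
        have hDfull : ∀ d ∈ D, G.degree d = n - 1 := by
          intro d hd
          have := sum_eq_of_le_of_eq
            (fun v (_ : v ∈ D) => Nat.pow_le_pow_left (hdegall v) p)
            (by rw [hDeq, hDk]) d hd
          exact eq_of_pow_eq (by omega) (hdegall d) this
        have hOfull : ∀ v ∈ Dᶜ, G.degree v = k := by
          intro v hv
          have := sum_eq_of_le_of_eq
            (fun w (hw : w ∈ Dᶜ) => Nat.pow_le_pow_left (houtdeg w hw) p)
            (by rw [hOeq, hOcard]) v hv
          exact eq_of_pow_eq (by omega) (houtdeg v hv) this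
        apply hbuild hDfull (fun v hv => Or.inl (hOfull v hv))
        rw [hpar, Finset.card_eq_zero, Finset.filter_eq_empty_iff]
        intro v hv
        rw [hOfull v hv]
        omega
    · -- odd case
      have hpar1 : m % 2 = 1 := by omega
      -- parity argument: some vertex outside has degree ≤ k - 1
      have hv0 : ∃ v₀ ∈ (Dᶜ : Finset (Fin n)), G.degree v₀ ≤ k - 1 := by
        by_contra hc
        push_neg at hc
        have hdeg_k : ∀ v ∈ Dᶜ, G.degree v = k := by
          intro v hv
          have := hc v hv
          have := houtdeg v hv
          omega
        have hsd_eq1 : ∀ v ∈ Dᶜ, (G.neighborFinset v \ D).card = 1 := by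
          intro v hv
          have h1 := hay v hv
          have h2 := hinterle v
          have h3 := hsd1 v hv
          rw [hdeg_k v hv] at h1
          omega
        set T := ((Dᶜ : Finset (Fin n)) ×ˢ (Dᶜ : Finset (Fin n))).filter
          (fun q => G.Adj q.1 q.2) with hT
        have heven : Even T.card := by
          apply even_card_of_swap
          · intro q hq
            rw [hT, Finset.mem_filter, Finset.mem_product] at hq ⊢
            exact ⟨⟨hq.1.2, hq.1.1⟩, hq.2.symm⟩
          · intro q hq
            rw [hT, Finset.mem_filter] at hq
            exact hq.2.ne
        have hTcard : T.card = ∑ v ∈ (Dᶜ : Finset (Fin n)), (G.neighborFinset v \ D).card := by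
          rw [hT, Finset.card_filter, Finset.sum_product]
          apply Finset.sum_congr rfl
          intro v hv
          have : G.neighborFinset v \ D = (Dᶜ : Finset (Fin n)).filter (fun w => G.Adj v w) := by
            ext w
            constructor
            · intro hw
              rw [Finset.mem_sdiff, SimpleGraph.mem_neighborFinset] at hw
              rw [Finset.mem_filter, Finset.mem_compl]
              exact ⟨hw.2, hw.1⟩
            · intro hw
              rw [Finset.mem_filter, Finset.mem_compl] at hw
              rw [Finset.mem_sdiff, SimpleGraph.mem_neighborFinset]
              exact ⟨hw.2, hw.1⟩
          rw [this, Finset.card_filter]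
        have hodd : T.card = m := by
          rw [hTcard, Finset.sum_congr rfl hsd_eq1, Finset.sum_const, smul_eq_mul,
            mul_one, hOcard]
        rw [hodd] at heven
        rw [Nat.even_iff] at heven
        omega
      obtain ⟨v₀, hv₀, hv₀deg⟩ := hv0
      have hOsplit : ∑ v ∈ Dᶜ, (G.degree v) ^ p =
          (G.degree v₀) ^ p + ∑ v ∈ Dᶜ.erase v₀, (G.degree v) ^ p :=
        (Finset.add_sum_erase _ _ hv₀).symm
      have herasecard : (Dᶜ.erase v₀).card = m - 1 := by
        rw [Finset.card_erase_of_mem hv₀, hOcard]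
      have hOsum : ∑ v ∈ Dᶜ.erase v₀, (G.degree v) ^ p ≤ (m - 1) * k ^ p := by
        have := Finset.sum_le_card_nsmul (Dᶜ.erase v₀) (fun v => (G.degree v) ^ p) (k ^ p)
          (fun v hv => Nat.pow_le_pow_left (houtdeg v (Finset.mem_of_mem_erase hv)) p)
        rw [herasecard] at this
        simpa using this
      have hv0sum : (G.degree v₀) ^ p ≤ (k - 1) ^ p := Nat.pow_le_pow_left hv₀deg p
      have hvaleq : ep p (joinG (⊤ : SimpleGraph (Fin (k - 1))) (matchG m)) =
          (k - 1) * (n - 1) ^ p + (m - 1) * k ^ p + (k - 1) ^ p := by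
        rw [hval, hpar1, one_mul]
      constructor
      · rw [hvaleq, hsplit, hOsplit]
        rw [hDk] at hDsum
        omega
      · intro he
        rw [hvaleq, hsplit, hOsplit] at he
        rw [hDk] at hDsum
        have hDeq : ∑ v ∈ D, (G.degree v) ^ p = (k - 1) * (n - 1) ^ p := by omega
        have hv0eq : (G.degree v₀) ^ p = (k - 1) ^ p := by omega
        have hOeq : ∑ v ∈ Dᶜ.erase v₀, (G.degree v) ^ p = (m - 1) * k ^ p := by omega
        have hDfull : ∀ d ∈ D, G.degree d = n - 1 := by
          intro d hd
          have := sum_eq_of_le_of_eq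
            (fun v (_ : v ∈ D) => Nat.pow_le_pow_left (hdegall v) p)
            (by rw [hDeq, hDk]) d hd
          exact eq_of_pow_eq (by omega) (hdegall d) this
        have hv0k : G.degree v₀ = k - 1 := eq_of_pow_eq (by omega) hv₀deg hv0eq
        have hOfull : ∀ v ∈ Dᶜ.erase v₀, G.degree v = k := by
          intro v hv
          have := sum_eq_of_le_of_eq
            (fun w (hw : w ∈ Dᶜ.erase v₀) =>
              Nat.pow_le_pow_left (houtdeg w (Finset.mem_of_mem_erase hw)) p)
            (by rw [hOeq, herasecard]) v hv
          exact eq_of_pow_eq (by omega) (houtdeg v (Finset.mem_of_mem_erase hv)) this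
        apply hbuild hDfull
        · intro v hv
          by_cases hvv : v = v₀
          · right; exact ⟨hvv ▸ hv0k, hpar1⟩
          · left; exact hOfull v (Finset.mem_erase.2 ⟨hvv, hv⟩)
        · have : ((Dᶜ : Finset (Fin n)).filter (fun v => G.degree v = k - 1)) = {v₀} := by
            ext v
            rw [Finset.mem_filter, Finset.mem_singleton]
            constructor
            · rintro ⟨hv, hdv⟩
              by_contra hvv
              have := hOfull v (Finset.mem_erase.2 ⟨hvv, hv⟩)
              omega
            · rintro rfl
              exact ⟨hv₀, hv0k⟩
          rw [this, Finset.card_singleton, hpar1]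

end MainCore
/-- degree-power Turán number of `k P₃`. -/
theorem kP3_exDP (k p : ℕ) (hk : 2 ≤ k) (hp : 2 ≤ p) :
    ∃ n0 : ℕ, ∀ n, n0 ≤ n →
      (exDP n p (forestG (fun _ : Fin k => 3) (fun _ => pathG 3))
        = ep p (joinG (⊤ : SimpleGraph (Fin (k - 1))) (matchG (n - (k - 1))))) ∧
      (∀ G : SimpleGraph (Fin n),
        Free (forestG (fun _ : Fin k => 3) (fun _ => pathG 3)) G →
          (ep p G = exDP n p (forestG (fun _ : Fin k => 3) (fun _ => pathG 3)) ↔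
            Nonempty (G ≃g joinG (⊤ : SimpleGraph (Fin (k - 1))) (matchG (n - (k - 1)))))) := by
  classical
  refine ⟨(3 * k + 2) ^ 3, fun n hn => ?_⟩
  have hkn : 3 * k + 2 ≤ n := le_trans (Nat.le_self_pow (by norm_num) _) hn
  have hnm : n = (k - 1) + (n - (k - 1)) := by omega
  set tgt := joinG (⊤ : SimpleGraph (Fin (k - 1))) (matchG (n - (k - 1))) with htgt
  set ψ : Fin n ≃ (Fin (k - 1) ⊕ Fin (n - (k - 1))) :=
    (finCongr hnm).trans finSumFinEquiv.symm with hψ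
  have iso : SimpleGraph.comap (⇑ψ.toEmbedding) tgt ≃g tgt := SimpleGraph.Iso.comap ψ tgt
  have hfree_tgt : Free (forestG (fun _ : Fin k => 3) (fun _ => pathG 3)) tgt :=
    target_free (by omega)
  have hfreeEG : Free (forestG (fun _ : Fin k => 3) (fun _ => pathG 3))
      (SimpleGraph.comap (⇑ψ.toEmbedding) tgt) := (free_congr iso).2 hfree_tgt
  have hepEG : ep p (SimpleGraph.comap (⇑ψ.toEmbedding) tgt) = ep p tgt := ep_congr iso p
  have hmemS : ep p tgt ∈ {x | ∃ G : SimpleGraph (Fin n),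
      Free (forestG (fun _ : Fin k => 3) (fun _ => pathG 3)) G ∧ ep p G = x} :=
    ⟨SimpleGraph.comap (⇑ψ.toEmbedding) tgt, hfreeEG, hepEG⟩
  have hub : ∀ x ∈ {x | ∃ G : SimpleGraph (Fin n),
      Free (forestG (fun _ : Fin k => 3) (fun _ => pathG 3)) G ∧ ep p G = x},
      x ≤ ep p tgt := by
    rintro x ⟨G, hGf, rfl⟩
    letI : DecidableRel G.Adj := Classical.decRel _
    exact (main_core hk hp hn G hGf).1
  have hsup : exDP n p (forestG (fun _ : Fin k => 3) (fun _ => pathG 3)) = ep p tgt := by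
    rw [exDP]
    exact le_antisymm (csSup_le ⟨_, hmemS⟩ hub) (le_csSup ⟨_, fun x hx => hub x hx⟩ hmemS)
  refine ⟨hsup, fun G hGfree => ?_⟩
  letI : DecidableRel G.Adj := Classical.decRel _
  constructor
  · intro he
    rw [hsup] at he
    exact (main_core hk hp hn G hGfree).2 he
  · rintro ⟨φ⟩
    rw [hsup]
    exact ep_congr φ p

end Paper
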